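/- Theorem 2.3 (global monotonicity in the critical case r = 3). Let n ≥ 2, μ > 0 and β > 0 with 2βμ ≥ 1. Then for all continuously differentiable, compactly supported, divergence-free vector fields u, v : ℝⁿ → ℝⁿ, writing w := u − v, one has μ ∫_{ℝⁿ} |∇w(x)|² dx + ( b(u,u,w) − b(v,v,w) ) + β ∫_{ℝⁿ} ⟨|u(x)|² u(x) − |v(x)|² v(x), w(x)⟩ dx ≥ (1/2)(β − 1/(2μ)) ∫_{ℝⁿ} |v(x)|² |w(x)|² dx ≥ 0. -/

import Mathlib

open MeasureTheory Finset
open scoped RealInnerProductSpace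

/-- The Navier–Stokes trilinear form
`b(u,v,w) = ∫ Σ_{i,j} u_i (∂v_j/∂x_i) w_j dx` on `ℝⁿ`. -/
noncomputable def bForm (n : ℕ)
    (u v w : EuclideanSpace ℝ (Fin n) → EuclideanSpace ℝ (Fin n)) : ℝ :=
  ∫ x, ∑ i, ∑ j, u x i * fderiv ℝ v x (EuclideanSpace.single i 1) j * w x j

/-- The squared Frobenius norm of the gradient, `|∇w(x)|² = Σ_{i,j} ((∂w_j/∂x_i)(x))²`. -/
noncomputable def gradSq (n : ℕ)
    (w : EuclideanSpace ℝ (Fin n) → EuclideanSpace ℝ (Fin n))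
    (x : EuclideanSpace ℝ (Fin n)) : ℝ :=
  ∑ i, ∑ j, (fderiv ℝ w x (EuclideanSpace.single i 1) j) ^ 2

/-! Write `w = u - v`. For divergence-free `a`, integrating `a · ∇⟨b, c⟩` by parts shows that
`b(a, ·, ·)` is antisymmetric, so the convective terms collapse to
`b(u,u,w) - b(v,v,w) = b(u,w,w) + b(w,v,w) = -b(w,w,v)`. Cauchy–Schwarz and Young bound
`b(w,w,v) ≤ μ ∫ |∇w|² + (4μ)⁻¹ ∫ |v|²|w|²`, while the identity
`⟨|u|²u - |v|²v, w⟩ = ½ (|u|² - |v|²)² + ½ (|u|² + |v|²) |w|²` makes the absorption term at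
least `½ ∫ |v|²|w|²`; as `β ≥ 1/(2μ)`, absorption wins. -/

section Pointwise

variable {ι : Type*} [Fintype ι] [DecidableEq ι]

theorem ContinuousLinearMap.euclidean_apply_eq_sum {F : Type*} [NormedAddCommGroup F]
    [NormedSpace ℝ F] (L : EuclideanSpace ℝ ι →L[ℝ] F) (a : EuclideanSpace ℝ ι) :
    L a = ∑ i, a i • L (EuclideanSpace.single i 1) := by
  conv_lhs => rw [← (EuclideanSpace.basisFun ι ℝ).sum_repr a]
  simp [map_sum, map_smul]

theorem inner_clm_apply_eq_sum (L : EuclideanSpace ℝ ι →L[ℝ] EuclideanSpace ℝ ι)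
    (a c : EuclideanSpace ℝ ι) :
    ⟪L a, c⟫ = ∑ i, ∑ j, a i * L (EuclideanSpace.single i 1) j * c j := by
  simp only [L.euclidean_apply_eq_sum a, sum_inner, PiLp.inner_apply, RCLike.inner_apply,
    conj_trivial, PiLp.smul_apply, smul_eq_mul]
  exact sum_congr rfl fun i _ => sum_congr rfl fun j _ => by ring

theorem inner_clm_apply_sq_le (L : EuclideanSpace ℝ ι →L[ℝ] EuclideanSpace ℝ ι)
    (a c : EuclideanSpace ℝ ι) :
    ⟪L a, c⟫ ^ 2 ≤ ‖a‖ ^ 2 * ‖c‖ ^ 2 * ∑ i, ∑ j, (L (EuclideanSpace.single i 1) j) ^ 2 := by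
  calc ⟪L a, c⟫ ^ 2
      = (∑ p ∈ univ ×ˢ univ, a p.1 * c p.2 * L (EuclideanSpace.single p.1 1) p.2) ^ 2 := by
        rw [inner_clm_apply_eq_sum, sum_product]
        congr 1
        exact sum_congr rfl fun i _ => sum_congr rfl fun j _ => by ring
    _ ≤ (∑ p ∈ univ ×ˢ univ, (a p.1 * c p.2) ^ 2)
          * ∑ p ∈ univ ×ˢ univ, (L (EuclideanSpace.single p.1 1) p.2) ^ 2 :=
        sum_mul_sq_le_sq_mul_sq _ _ _
    _ = _ := by
        simp only [sum_product, mul_pow, ← sum_mul_sum, EuclideanSpace.real_norm_sq_eq]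

theorem le_mul_add_of_sq_le_mul {s B G μ : ℝ} (hμ : 0 < μ) (hB : 0 ≤ B) (hG : 0 ≤ G)
    (hs : s ^ 2 ≤ B * G) : s ≤ μ * G + 1 / (4 * μ) * B := by
  have hsq : (4 * μ * s) ^ 2 ≤ (4 * μ ^ 2 * G + B) ^ 2 := by
    nlinarith [sq_nonneg (4 * μ ^ 2 * G - B)]
  have := le_of_sq_le_sq hsq (by positivity)
  rw [← mul_le_mul_iff_of_pos_left (by positivity : 0 < 4 * μ)]
  field_simp
  nlinarith

variable {F : Type*} [NormedAddCommGroup F] [InnerProductSpace ℝ F]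

theorem inner_norm_sq_smul_sub_norm_sq_smul (s t : F) :
    ⟪‖s‖ ^ 2 • s - ‖t‖ ^ 2 • t, s - t⟫
      = ((‖s‖ ^ 2 - ‖t‖ ^ 2) ^ 2 + (‖s‖ ^ 2 + ‖t‖ ^ 2) * ‖s - t‖ ^ 2) / 2 := by
  simp only [norm_sub_sq_real, inner_sub_left, inner_sub_right, real_inner_smul_left,
    real_inner_self_eq_norm_sq, real_inner_comm t s]
  ring

theorem norm_sq_mul_norm_sub_sq_le_inner (s t : F) :
    1 / 2 * (‖t‖ ^ 2 * ‖s - t‖ ^ 2) ≤ ⟪‖s‖ ^ 2 • s - ‖t‖ ^ 2 • t, s - t⟫ := by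
  rw [inner_norm_sq_smul_sub_norm_sq_smul]
  nlinarith [sq_nonneg (‖s‖ ^ 2 - ‖t‖ ^ 2), mul_nonneg (sq_nonneg ‖s‖) (sq_nonneg ‖s - t‖)]

end Pointwise

section Calculus

variable {ι : Type*} [Fintype ι]

theorem fderiv_euclidean_apply {u : EuclideanSpace ℝ ι → EuclideanSpace ℝ ι}
    {x : EuclideanSpace ℝ ι} (hu : DifferentiableAt ℝ u x) (i : ι) (ξ : EuclideanSpace ℝ ι) :
    fderiv ℝ (fun y => u y i) x ξ = fderiv ℝ u x ξ i :=
  congrArg (· ξ) ((EuclideanSpace.proj i).hasFDerivAt.comp x hu.hasFDerivAt).fderiv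

theorem integrable_inner_fderiv_apply {a b c : EuclideanSpace ℝ ι → EuclideanSpace ℝ ι}
    (ha : Continuous a) (hca : HasCompactSupport a) (hb : ContDiff ℝ 1 b) (hc : Continuous c) :
    Integrable fun x => ⟪fderiv ℝ b x (a x), c x⟫ :=
  ((hb.continuous_fderiv one_ne_zero).clm_apply ha).inner hc
    |>.integrable_of_hasCompactSupport <| hca.mono <| Function.support_subset_iff'.2
      fun x hx => by simp [Function.notMem_support.1 hx]

theorem integrable_norm_sq_mul_norm_sq {v w : EuclideanSpace ℝ ι → EuclideanSpace ℝ ι}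
    (hv : Continuous v) (hw : Continuous w) (hcw : HasCompactSupport w) :
    Integrable fun x => ‖v x‖ ^ 2 * ‖w x‖ ^ 2 := by
  refine Continuous.integrable_of_hasCompactSupport ?_ ?_
  · exact (hv.norm.pow 2).mul (hw.norm.pow 2)
  · exact (hcw.comp_left (g := fun y => ‖y‖ ^ 2) (by simp)).mul_left

theorem integral_norm_sq_mul_norm_sub_sq_le_integral_inner
    {u v : EuclideanSpace ℝ ι → EuclideanSpace ℝ ι} (hu : Continuous u) (hcu : HasCompactSupport u)
    (hv : Continuous v) (hcv : HasCompactSupport v) :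
    1 / 2 * ∫ x, ‖v x‖ ^ 2 * ‖u x - v x‖ ^ 2
      ≤ ∫ x, ⟪‖u x‖ ^ 2 • u x - ‖v x‖ ^ 2 • v x, u x - v x⟫ := by
  have hinner : Integrable fun x => ⟪‖u x‖ ^ 2 • u x - ‖v x‖ ^ 2 • v x, u x - v x⟫ := by
    refine Continuous.integrable_of_hasCompactSupport ?_ ?_
    · exact ((hu.norm.pow 2).smul hu).sub ((hv.norm.pow 2).smul hv) |>.inner (hu.sub hv)
    · exact (hcu.sub hcv).mono <| Function.support_subset_iff'.2 fun x hx => by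
        simp [show u x - v x = 0 from Function.notMem_support.1 hx]
  rw [← integral_const_mul]
  exact integral_mono ((integrable_norm_sq_mul_norm_sq hv (hu.sub hv) (hcu.sub hcv)).const_mul _)
    hinner fun x => norm_sq_mul_norm_sub_sq_le_inner (u x) (v x)

variable [DecidableEq ι]

noncomputable def divergence (u : EuclideanSpace ℝ ι → EuclideanSpace ℝ ι)
    (x : EuclideanSpace ℝ ι) : ℝ :=
  ∑ i, fderiv ℝ u x (EuclideanSpace.single i 1) i

variable {u v : EuclideanSpace ℝ ι → EuclideanSpace ℝ ι}

theorem divergence_sub {x : EuclideanSpace ℝ ι} (hu : DifferentiableAt ℝ u x)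
    (hv : DifferentiableAt ℝ v x) : divergence (u - v) x = divergence u x - divergence v x := by
  simp [divergence, fderiv_sub hu hv, sum_sub_distrib]

theorem integral_fderiv_apply_eq_neg_integral_divergence_mul {f : EuclideanSpace ℝ ι → ℝ}
    (hu : ContDiff ℝ 1 u) (hcu : HasCompactSupport u) (hf : ContDiff ℝ 1 f) :
    ∫ x, fderiv ℝ f x (u x) = -∫ x, divergence u x * f x := by
  set e : ι → EuclideanSpace ℝ ι := fun i => EuclideanSpace.single i 1
  have hcoord (i : ι) : ContDiff ℝ 1 (fun x => u x i) :=
    (EuclideanSpace.proj i : EuclideanSpace ℝ ι →L[ℝ] ℝ).contDiff.comp hu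
  have hcs (i : ι) : HasCompactSupport (fun x => u x i) :=
    hcu.comp_left (g := EuclideanSpace.proj i) (map_zero _)
  have hderiv (x : EuclideanSpace ℝ ι) (i : ι) :
      fderiv ℝ (fun y => u y i) x (e i) = fderiv ℝ u x (e i) i :=
    fderiv_euclidean_apply (hu.differentiable one_ne_zero x) i (e i)
  have hint (i : ι) : Integrable fun x => u x i * fderiv ℝ f x (e i) :=
    (hcoord i).continuous.mul (hf.continuous_fderiv one_ne_zero |>.clm_apply continuous_const)
      |>.integrable_of_hasCompactSupport (hcs i).mul_right
  have hint' (i : ι) : Integrable fun x => fderiv ℝ (fun y => u y i) x (e i) * f x :=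
    ((hcoord i).continuous_fderiv one_ne_zero |>.clm_apply continuous_const).mul hf.continuous
      |>.integrable_of_hasCompactSupport ((hcs i).fderiv_apply (𝕜 := ℝ) _).mul_right
  have hparts (i : ι) : ∫ x, u x i * fderiv ℝ f x (e i)
      = -∫ x, fderiv ℝ (fun y => u y i) x (e i) * f x :=
    integral_mul_fderiv_eq_neg_fderiv_mul_of_integrable (hint' i) (hint i)
      ((hcoord i).continuous.mul hf.continuous |>.integrable_of_hasCompactSupport
        (hcs i).mul_right)
      (fun x _ => (hcoord i).differentiable one_ne_zero x)
      (fun x _ => hf.differentiable one_ne_zero x)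
  calc ∫ x, fderiv ℝ f x (u x)
      = ∫ x, ∑ i, u x i * fderiv ℝ f x (e i) := by
        simp only [ContinuousLinearMap.euclidean_apply_eq_sum _ (u _), smul_eq_mul, e]
    _ = ∑ i, -∫ x, fderiv ℝ (fun y => u y i) x (e i) * f x := by
        rw [integral_finsetSum _ fun i _ => hint i]
        exact sum_congr rfl fun i _ => hparts i
    _ = -∫ x, divergence u x * f x := by
        rw [sum_neg_distrib, ← integral_finsetSum _ fun i _ => hint' i]
        simp only [hderiv, ← sum_mul]
        rfl

end Calculus

section TrilinearForm

variable {n : ℕ}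

local notation "E" => EuclideanSpace ℝ (Fin n)

theorem bForm_eq_integral_inner (u v w : E → E) :
    bForm n u v w = ∫ x, ⟪fderiv ℝ v x (u x), w x⟫ := by
  simp only [bForm, inner_clm_apply_eq_sum]

theorem bForm_add_bForm_swap_eq_zero {a b c : E → E} (ha : ContDiff ℝ 1 a)
    (hca : HasCompactSupport a) (hdiv : ∀ x, divergence a x = 0) (hb : ContDiff ℝ 1 b)
    (hc : ContDiff ℝ 1 c) : bForm n a b c + bForm n a c b = 0 := by
  have hderiv (x : E) : ⟪fderiv ℝ b x (a x), c x⟫ + ⟪fderiv ℝ c x (a x), b x⟫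
      = fderiv ℝ (fun y => ⟪b y, c y⟫) x (a x) := by
    rw [fderiv_inner_apply ℝ (hb.differentiable one_ne_zero x) (hc.differentiable one_ne_zero x),
      real_inner_comm (b x), add_comm]
  rw [bForm_eq_integral_inner, bForm_eq_integral_inner, ← integral_add
    (integrable_inner_fderiv_apply ha.continuous hca hb hc.continuous)
    (integrable_inner_fderiv_apply ha.continuous hca hc hb.continuous)]
  simp only [hderiv, integral_fderiv_apply_eq_neg_integral_divergence_mul ha hca (hb.inner ℝ hc),
    hdiv, zero_mul, integral_zero, neg_zero]

theorem bForm_sub_bForm_eq_neg {u v : E → E} (hu : ContDiff ℝ 1 u) (hcu : HasCompactSupport u)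
    (hdu : ∀ x, divergence u x = 0) (hv : ContDiff ℝ 1 v) (hcv : HasCompactSupport v)
    (hdv : ∀ x, divergence v x = 0) :
    bForm n u u (u - v) - bForm n v v (u - v) = -bForm n (u - v) (u - v) v := by
  have hw : ContDiff ℝ 1 (u - v) := hu.sub hv
  have hcw : HasCompactSupport (u - v) := hcu.sub hcv
  have hdw (x : E) : divergence (u - v) x = 0 := by
    rw [divergence_sub (hu.differentiable one_ne_zero x) (hv.differentiable one_ne_zero x),
      hdu, hdv, sub_zero]
  have hsplit : bForm n u u (u - v) - bForm n v v (u - v)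
      = bForm n u (u - v) (u - v) + bForm n (u - v) v (u - v) := by
    simp only [bForm_eq_integral_inner]
    rw [← integral_sub (integrable_inner_fderiv_apply hu.continuous hcu hu hw.continuous)
        (integrable_inner_fderiv_apply hv.continuous hcv hv hw.continuous),
      ← integral_add (integrable_inner_fderiv_apply hu.continuous hcu hw hw.continuous)
        (integrable_inner_fderiv_apply hw.continuous hcw hv hw.continuous)]
    congr 1 with x
    simp only [fderiv_sub (hu.differentiable one_ne_zero x) (hv.differentiable one_ne_zero x),
      Pi.sub_apply, sub_apply, map_sub, inner_sub_left]
    ring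
  have huww := bForm_add_bForm_swap_eq_zero hu hcu hdu hw hw
  have hwvw := bForm_add_bForm_swap_eq_zero hw hcw hdw hv hw
  linarith

theorem bForm_le_mul_integral_gradSq_add {v w : E → E} {μ : ℝ} (hμ : 0 < μ)
    (hw : ContDiff ℝ 1 w) (hcw : HasCompactSupport w) (hv : Continuous v) :
    bForm n w w v ≤ μ * (∫ x, gradSq n w x) + 1 / (4 * μ) * ∫ x, ‖v x‖ ^ 2 * ‖w x‖ ^ 2 := by
  have hgrad : Integrable (gradSq n w) := by
    refine Continuous.integrable_of_hasCompactSupport ?_ ?_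
    · exact continuous_finsetSum _ fun i _ => continuous_finsetSum _ fun j _ =>
        ((EuclideanSpace.proj j).continuous.comp
        ((hw.continuous_fderiv one_ne_zero).clm_apply continuous_const)).pow 2
    · exact hcw.fderiv (𝕜 := ℝ) |>.mono <| Function.support_subset_iff'.2 fun x hx => by
        simp [gradSq, Function.notMem_support.1 hx]
  have hvw := integrable_norm_sq_mul_norm_sq hv hw.continuous hcw
  rw [bForm_eq_integral_inner, ← integral_const_mul, ← integral_const_mul,
    ← integral_add (hgrad.const_mul _) (hvw.const_mul _)]
  refine integral_mono (integrable_inner_fderiv_apply hw.continuous hcw hw hv)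
    ((hgrad.const_mul _).add (hvw.const_mul _)) fun x => ?_
  refine le_mul_add_of_sq_le_mul hμ (by positivity)
    (sum_nonneg fun i _ => sum_nonneg fun j _ => sq_nonneg _) ?_
  rw [mul_comm (‖v x‖ ^ 2)]
  exact inner_clm_apply_sq_le (fderiv ℝ w x) (w x) (v x)

end TrilinearForm

theorem global_monotonicity_critical_general (n : ℕ) (μ β : ℝ)
    (hμ : 0 < μ) (hβμ : 1 ≤ 2 * β * μ)
    (u v : EuclideanSpace ℝ (Fin n) → EuclideanSpace ℝ (Fin n))
    (hu : ContDiff ℝ 1 u) (hcu : HasCompactSupport u)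
    (hdu : ∀ x, ∑ i, fderiv ℝ u x (EuclideanSpace.single i 1) i = 0)
    (hv : ContDiff ℝ 1 v) (hcv : HasCompactSupport v)
    (hdv : ∀ x, ∑ i, fderiv ℝ v x (EuclideanSpace.single i 1) i = 0) :
    (1 / 2) * (β - 1 / (2 * μ)) * (∫ x, ‖v x‖ ^ 2 * ‖u x - v x‖ ^ 2) ≤
      μ * (∫ x, gradSq n (u - v) x)
        + (bForm n u u (u - v) - bForm n v v (u - v))
        + β * (∫ x, ⟪(‖u x‖ ^ 2 : ℝ) • u x - (‖v x‖ ^ 2 : ℝ) • v x, u x - v x⟫)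
    ∧ 0 ≤ (1 / 2) * (β - 1 / (2 * μ)) * (∫ x, ‖v x‖ ^ 2 * ‖u x - v x‖ ^ 2) := by
  have hβ : 1 / (2 * μ) ≤ β := by
    rw [div_le_iff₀ (by positivity)]
    linarith
  have hconv := bForm_sub_bForm_eq_neg hu hcu hdu hv hcv hdv
  have hyoung : bForm n (u - v) (u - v) v
      ≤ μ * (∫ x, gradSq n (u - v) x) + 1 / (4 * μ) * ∫ x, ‖v x‖ ^ 2 * ‖u x - v x‖ ^ 2 :=
    bForm_le_mul_integral_gradSq_add hμ (hu.sub hv) (hcu.sub hcv) hv.continuous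
  have habs := integral_norm_sq_mul_norm_sub_sq_le_integral_inner hu.continuous hcu
    hv.continuous hcv
  set I := ∫ x, ‖v x‖ ^ 2 * ‖u x - v x‖ ^ 2
  have hI : 0 ≤ I := integral_nonneg fun x => by positivity
  have hcoeff : 1 / 2 * (β - 1 / (2 * μ)) * I = β * (1 / 2 * I) - 1 / (4 * μ) * I := by
    field_simp
    ring
  refine ⟨?_, mul_nonneg (by linarith) hI⟩
  rw [hconv, hcoeff]
  linarith [mul_le_mul_of_nonneg_left habs (hβ.trans' (by positivity))]

/-- Theorem 2.3: global monotonicity of the convective Brinkman–Forchheimer operator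
in the critical case `r = 3`, assuming `2βμ ≥ 1`. -/
theorem global_monotonicity_critical (n : ℕ) (hn : 2 ≤ n) (μ β : ℝ)
    (hμ : 0 < μ) (hβ : 0 < β) (hβμ : 1 ≤ 2 * β * μ)
    (u v : EuclideanSpace ℝ (Fin n) → EuclideanSpace ℝ (Fin n))
    (hu : ContDiff ℝ 1 u) (hcu : HasCompactSupport u)
    (hdu : ∀ x, ∑ i, fderiv ℝ u x (EuclideanSpace.single i 1) i = 0)
    (hv : ContDiff ℝ 1 v) (hcv : HasCompactSupport v)
    (hdv : ∀ x, ∑ i, fderiv ℝ v x (EuclideanSpace.single i 1) i = 0) :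
    (1 / 2) * (β - 1 / (2 * μ)) * (∫ x, ‖v x‖ ^ 2 * ‖u x - v x‖ ^ 2) ≤
      μ * (∫ x, gradSq n (u - v) x)
        + (bForm n u u (u - v) - bForm n v v (u - v))
        + β * (∫ x, ⟪(‖u x‖ ^ 2 : ℝ) • u x - (‖v x‖ ^ 2 : ℝ) • v x, u x - v x⟫)
    ∧ 0 ≤ (1 / 2) * (β - 1 / (2 * μ)) * (∫ x, ‖v x‖ ^ 2 * ‖u x - v x‖ ^ 2) :=
  global_monotonicity_critical_general n μ β hμ hβμ u v hu hcu hdu hv hcv hdv
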